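/- arXiv:1902.11163 — 3 statements merged into one kernel-verified Lean document; each statement's English description precedes it below -/
import Mathlib

section
/- Let p ∈ (0,1), let n ≥ 1 be an integer, let S_1,…,S_n be i.i.d. random variables with P(S_l = m) = p^{m−1}(1−p) for integers m ≥ 1, and let M := max_{l=1,…,n} S_l. Then (log n)/(log(1/p)) ≤ E[M] ≤ 1 + (1 + log n)/(log(1/p)). -/
/-!
Since `M` is `ℕ`-valued, `E[M] = ∑ₖ P(M > k) = ∑ₖ f(k)` with `f(x) = 1 - (1 - p^x)^n`, by
independence. The function `f` is antitone on `[0, ∞)`, so its sum over `ℕ` lies between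
`∫₀^∞ f` and `f(0) + ∫₀^∞ f`. The substitution `u = p^x` and `1 - (1 - u)^n = u ∑_{j<n} (1 - u)^j`
give the primitive `∑_{j<n} (1 - p^x)^(j+1)/(j+1) / log(1/p)` of `f`, whence
`∫₀^∞ f = H_n / log(1/p)`; finally `log n ≤ H_n ≤ 1 + log n`.
-/

open MeasureTheory ProbabilityTheory Finset Filter Topology
open scoped ENNReal

section GeometricTailSum

variable {p : ℝ} (n : ℕ)

lemma one_sub_one_sub_pow_pow_nonneg (hp0 : 0 ≤ p) (hp1 : p ≤ 1) (k : ℕ) :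
    0 ≤ 1 - (1 - p ^ k) ^ n := by
  have hpk : p ^ k ≤ 1 := pow_le_one₀ hp0 hp1
  have : (1 - p ^ k) ^ n ≤ 1 := pow_le_one₀ (by linarith) (by linarith [pow_nonneg hp0 k])
  linarith

lemma hasDerivAt_sum_one_sub_rpow_pow (hp : 0 < p) (x : ℝ) :
    HasDerivAt (fun x : ℝ => ∑ j ∈ range n, (1 - p ^ x) ^ (j + 1) / (j + 1))
      ((1 - (1 - p ^ x) ^ n) * Real.log (1 / p)) x := by
  have hq : HasDerivAt (fun x : ℝ => 1 - p ^ x) (-(p ^ x * Real.log p)) x :=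
    ((Real.hasStrictDerivAt_const_rpow hp x).hasDerivAt).const_sub 1
  refine (HasDerivAt.fun_sum fun j _ => (hq.pow (j + 1)).div_const ((j : ℝ) + 1)).congr_deriv ?_
  have hterm : ∀ j ∈ range n,
      ((j + 1 : ℕ) : ℝ) * (1 - p ^ x) ^ (j + 1 - 1) * -(p ^ x * Real.log p) / ((j : ℝ) + 1) =
        (1 - p ^ x) ^ j * (p ^ x * Real.log (1 / p)) := by
    intro j _
    rw [Nat.add_sub_cancel, one_div, Real.log_inv]
    push_cast
    field_simp
  rw [Finset.sum_congr rfl hterm, ← Finset.sum_mul]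
  linear_combination -Real.log (1 / p) * geom_sum_mul (1 - p ^ x) n

lemma antitoneOn_one_sub_one_sub_rpow_pow (hp0 : 0 < p) (hp1 : p ≤ 1) :
    AntitoneOn (fun x : ℝ => 1 - (1 - p ^ x) ^ n) (Set.Ici 0) := by
  intro x hx y _ hxy
  have hpy : p ^ y ≤ p ^ x := Real.rpow_le_rpow_of_exponent_ge hp0 hp1 hxy
  have hpx : p ^ x ≤ 1 := Real.rpow_le_one hp0.le hp1 hx
  have : (1 - p ^ x) ^ n ≤ (1 - p ^ y) ^ n := by gcongr
  linarith

lemma integral_one_sub_one_sub_rpow_pow (hp0 : 0 < p) (hp1 : p ≠ 1) (N : ℝ) :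
    ∫ x in 0..N, (1 - (1 - p ^ x) ^ n) =
      (∑ j ∈ range n, (1 - p ^ N) ^ (j + 1) / (j + 1)) / Real.log (1 / p) := by
  have hc : Real.log (1 / p) ≠ 0 := by
    rw [one_div, Real.log_inv, neg_ne_zero]
    exact Real.log_ne_zero_of_pos_of_ne_one hp0 hp1
  have hcont : Continuous fun x : ℝ => 1 - (1 - p ^ x) ^ n := by
    have := hp0.ne'
    fun_prop
  rw [eq_div_iff hc, ← intervalIntegral.integral_mul_const,
    intervalIntegral.integral_eq_sub_of_hasDerivAt
      (fun x _ => hasDerivAt_sum_one_sub_rpow_pow n hp0 x)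
      ((hcont.mul continuous_const).intervalIntegrable _ _)]
  simp

lemma sum_le_integral_one_sub_one_sub_rpow_pow_le_sum (hp0 : 0 < p) (hp1 : p ≤ 1) (N : ℕ) :
    ∑ k ∈ range N, (1 - (1 - p ^ (k + 1)) ^ n) ≤ ∫ x in 0..N, (1 - (1 - p ^ x) ^ n) ∧
      ∫ x in 0..N, (1 - (1 - p ^ x) ^ n) ≤ ∑ k ∈ range N, (1 - (1 - p ^ k) ^ n) := by
  have hf : AntitoneOn (fun x : ℝ => 1 - (1 - p ^ x) ^ n) (Set.Icc 0 (0 + N)) :=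
    (antitoneOn_one_sub_one_sub_rpow_pow n hp0 hp1).mono Set.Icc_subset_Ici_self
  have hlow := hf.sum_le_integral
  have hupp := hf.integral_le_sum
  simp only [zero_add, Real.rpow_natCast] at hlow hupp
  exact ⟨hlow, hupp⟩

lemma sum_pow_succ_div_le_harmonic {t : ℝ} (ht0 : 0 ≤ t) (ht1 : t ≤ 1) :
    ∑ j ∈ range n, t ^ (j + 1) / (j + 1) ≤ harmonic n := by
  rw [harmonic, Rat.cast_sum]
  gcongr with j
  push_cast
  rw [inv_eq_one_div]
  gcongr
  exact pow_le_one₀ ht0 ht1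

lemma tendsto_sum_one_sub_pow_succ_div (hp0 : 0 ≤ p) (hp1 : p < 1) :
    Tendsto (fun N : ℕ => ∑ j ∈ range n, (1 - p ^ N) ^ (j + 1) / (j + 1)) atTop
      (𝓝 (harmonic n)) := by
  have hq : Tendsto (fun N : ℕ => 1 - p ^ N) atTop (𝓝 1) := by
    simpa using (tendsto_pow_atTop_nhds_zero_of_lt_one hp0 hp1).const_sub 1
  rw [harmonic, Rat.cast_sum]
  refine tendsto_finsetSum _ fun j _ => ?_
  convert (hq.pow (j + 1)).div_const ((j : ℝ) + 1) using 2
  push_cast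
  rw [one_pow, inv_eq_one_div]

theorem tsum_one_sub_one_sub_pow_pow_bounds (hp0 : 0 < p) (hp1 : p < 1) :
    Summable (fun k : ℕ => 1 - (1 - p ^ k) ^ n) ∧
      harmonic n / Real.log (1 / p) ≤ ∑' k : ℕ, (1 - (1 - p ^ k) ^ n) ∧
      ∑' k : ℕ, (1 - (1 - p ^ k) ^ n) ≤ 1 + harmonic n / Real.log (1 / p) := by
  set a : ℕ → ℝ := fun k => 1 - (1 - p ^ k) ^ n with ha
  set c := Real.log (1 / p)
  have hc : 0 < c := Real.log_pos (one_lt_one_div hp0 hp1)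
  have ha_nonneg := one_sub_one_sub_pow_pow_nonneg n hp0.le hp1.le
  have hF (N : ℕ) := sum_le_integral_one_sub_one_sub_rpow_pow_le_sum n hp0 hp1.le N
  simp only [integral_one_sub_one_sub_rpow_pow n hp0 hp1.ne, Real.rpow_natCast] at hF
  have hF_le (N : ℕ) : (∑ j ∈ range n, (1 - p ^ N) ^ (j + 1) / (j + 1)) / c ≤ harmonic n / c := by
    gcongr
    exact sum_pow_succ_div_le_harmonic n (by simp [pow_le_one₀ hp0.le hp1.le]) (by simp [hp0.le])
  have hsum_succ : Summable fun k => a (k + 1) :=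
    summable_of_sum_range_le (fun k => ha_nonneg _) fun N => (hF N).1.trans (hF_le N)
  have hsum : Summable a := (summable_nat_add_iff 1).mp hsum_succ
  refine ⟨hsum, ?_, ?_⟩
  · exact le_of_tendsto' ((tendsto_sum_one_sub_pow_succ_div n hp0.le hp1).div_const c)
      fun N => (hF N).2.trans (hsum.sum_le_tsum _ fun k _ => ha_nonneg k)
  · rw [hsum.tsum_eq_zero_add]
    gcongr
    · simp [ha]
    · exact hsum_succ.tsum_le_of_sum_range_le fun N => (hF N).1.trans (hF_le N)

end GeometricTailSum

section TailSum

variable {Ω : Type*} [MeasurableSpace Ω] {μ : Measure Ω} {X : Ω → ℕ}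

theorem lintegral_natCast_eq_tsum_measure_lt (hX : Measurable X) :
    ∫⁻ ω, (X ω : ℝ≥0∞) ∂μ = ∑' k : ℕ, μ {ω | k < X ω} := by
  have hset (k : ℕ) : MeasurableSet {ω | k < X ω} := hX measurableSet_Ioi
  have hcount (ω : Ω) : (X ω : ℝ≥0∞) = ∑' k : ℕ, {ω | k < X ω}.indicator 1 ω := by
    rw [tsum_eq_sum (s := range (X ω)) fun k hk => by simpa using hk]
    simp [Set.indicator_apply, ← Finset.mem_range]
  simp_rw [hcount, ← lintegral_indicator_one (hset _)]
  exact lintegral_tsum fun k => (measurable_const.indicator (hset k)).aemeasurable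

theorem integral_natCast_eq_tsum_of_measure_lt_eq [IsFiniteMeasure μ] (hX : Measurable X)
    {a : ℕ → ℝ} (ha_nonneg : ∀ k, 0 ≤ a k) (ha : Summable a)
    (htail : ∀ k, μ {ω | k < X ω} = ENNReal.ofReal (a k)) :
    ∫ ω, (X ω : ℝ) ∂μ = ∑' k, a k := by
  rw [integral_eq_lintegral_of_nonneg_ae (ae_of_all _ fun ω => Nat.cast_nonneg _)
      (measurable_from_nat.comp hX).aestronglyMeasurable]
  simp_rw [ENNReal.ofReal_natCast]
  rw [lintegral_natCast_eq_tsum_measure_lt hX, tsum_congr htail,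
    ← ENNReal.ofReal_tsum_of_nonneg ha_nonneg ha, ENNReal.toReal_ofReal (tsum_nonneg ha_nonneg)]

end TailSum

section GeometricMax

variable {Ω : Type*} [MeasurableSpace Ω] {μ : Measure Ω} {p : ℝ}

theorem measure_lt_eq_pow_of_geometric {X : Ω → ℕ} (hX : Measurable X) (hp0 : 0 ≤ p)
    (hp1 : p < 1)
    (hdist : ∀ m : ℕ, 1 ≤ m → μ {ω | X ω = m} = ENNReal.ofReal (p ^ (m - 1) * (1 - p)))
    (k : ℕ) : μ {ω | k < X ω} = ENNReal.ofReal (p ^ k) := by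
  have hset : {ω | k < X ω} = ⋃ m : ℕ, {ω | X ω = k + 1 + m} := by
    ext ω
    simp only [Set.mem_ofPred_eq, Set.mem_iUnion]
    exact ⟨fun h => ⟨X ω - (k + 1), by omega⟩, fun ⟨m, hm⟩ => by omega⟩
  have hterm (m : ℕ) : μ {ω | X ω = k + 1 + m} = ENNReal.ofReal (p ^ k * (1 - p) * p ^ m) := by
    rw [hdist _ (by omega), show k + 1 + m - 1 = k + m by omega, pow_add]
    ring_nf
  have hpk : 0 ≤ p ^ k * (1 - p) := mul_nonneg (pow_nonneg hp0 k) (by linarith)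
  have hmeas (m : ℕ) : MeasurableSet {ω | X ω = k + 1 + m} := hX (measurableSet_singleton _)
  have hdisj : Pairwise fun i j : ℕ => Disjoint {ω | X ω = k + 1 + i} {ω | X ω = k + 1 + j} :=
    fun i j hij => Set.disjoint_left.2 fun ω hi hj => hij (by simp_all)
  rw [hset, measure_iUnion hdisj hmeas,
    tsum_congr hterm, ← ENNReal.ofReal_tsum_of_nonneg (fun m => mul_nonneg hpk (pow_nonneg hp0 m))
      ((summable_geometric_of_lt_one hp0 hp1).mul_left _),
    tsum_mul_left, tsum_geometric_of_lt_one hp0 hp1, mul_assoc,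
    mul_inv_cancel₀ (by linarith), mul_one]

theorem ProbabilityTheory.iIndepFun.measure_sup_le {ι : Type*} [Fintype ι] {S : ι → Ω → ℕ}
    (hS : iIndepFun S μ) (k : ℕ) : μ {ω | univ.sup (S · ω) ≤ k} = ∏ l, μ {ω | S l ω ≤ k} := by
  have hset : {ω | univ.sup (S · ω) ≤ k} = ⋂ l, S l ⁻¹' Set.Iic k := by
    ext ω
    simp [Finset.sup_le_iff]
  rw [hset, hS.meas_iInter fun l => ⟨Set.Iic k, measurableSet_Iic, rfl⟩]
  rfl

theorem measure_lt_sup_of_iid_geometric [IsProbabilityMeasure μ] {ι : Type*} [Fintype ι]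
    {S : ι → Ω → ℕ} (hS_meas : ∀ l, Measurable (S l)) (hS : iIndepFun S μ)
    (hp0 : 0 ≤ p) (hp1 : p < 1)
    (hdist : ∀ l, ∀ m : ℕ, 1 ≤ m → μ {ω | S l ω = m} = ENNReal.ofReal (p ^ (m - 1) * (1 - p)))
    (k : ℕ) :
    μ {ω | k < univ.sup (S · ω)} = ENNReal.ofReal (1 - (1 - p ^ k) ^ Fintype.card ι) := by
  have hpk : p ^ k ≤ 1 := pow_le_one₀ hp0 hp1.le
  have hcdf (l : ι) : μ {ω | S l ω ≤ k} = ENNReal.ofReal (1 - p ^ k) := by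
    have hcompl : {ω | S l ω ≤ k} = {ω | k < S l ω}ᶜ := by ext; simp
    rw [hcompl, prob_compl_eq_one_sub (measurableSet_lt measurable_const (hS_meas l)),
      measure_lt_eq_pow_of_geometric (hS_meas l) hp0 hp1 (hdist l), ← ENNReal.ofReal_one,
      ← ENNReal.ofReal_sub _ (pow_nonneg hp0 k)]
  have hmeas : MeasurableSet {ω | univ.sup (S · ω) ≤ k} :=
    (by fun_prop : Measurable fun ω => univ.sup (S · ω)) measurableSet_Iic
  have hcompl : {ω | k < univ.sup (S · ω)} = {ω | univ.sup (S · ω) ≤ k}ᶜ := by ext; simp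
  rw [hcompl, prob_compl_eq_one_sub hmeas, hS.measure_sup_le,
    Finset.prod_congr rfl fun l _ => hcdf l, prod_const, card_univ,
    ← ENNReal.ofReal_pow (by linarith), ← ENNReal.ofReal_one,
    ← ENNReal.ofReal_sub _ (pow_nonneg (by linarith) _)]

end GeometricMax

theorem expected_max_geometric_bounds_general
    {Ω : Type*} [MeasurableSpace Ω] (P : Measure Ω) [IsProbabilityMeasure P]
    (p : ℝ) (hp0 : 0 < p) (hp1 : p < 1) (n : ℕ)
    (S : Fin n → Ω → ℕ) (hmeas : ∀ l, Measurable (S l))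
    (hindep : iIndepFun S P)
    (hdist : ∀ l (m : ℕ), 1 ≤ m →
      P {ω | S l ω = m} = ENNReal.ofReal (p ^ (m - 1) * (1 - p))) :
    Real.log n / Real.log (1 / p) ≤
        ∫ ω, ((Finset.univ.sup fun l => S l ω : ℕ) : ℝ) ∂P ∧
      ∫ ω, ((Finset.univ.sup fun l => S l ω : ℕ) : ℝ) ∂P ≤
        1 + (1 + Real.log n) / Real.log (1 / p) := by
  have hc : 0 < Real.log (1 / p) := Real.log_pos (one_lt_one_div hp0 hp1)
  obtain ⟨hsum, hlow, hupp⟩ := tsum_one_sub_one_sub_pow_pow_bounds n hp0 hp1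
  have htail (k : ℕ) : P {ω | k < univ.sup (S · ω)} = ENNReal.ofReal (1 - (1 - p ^ k) ^ n) := by
    simpa using measure_lt_sup_of_iid_geometric hmeas hindep hp0.le hp1 hdist k
  rw [integral_natCast_eq_tsum_of_measure_lt_eq (by fun_prop)
    (fun k => one_sub_one_sub_pow_pow_nonneg n hp0.le hp1.le k) hsum htail]
  constructor
  · calc Real.log n / Real.log (1 / p) ≤ harmonic n / Real.log (1 / p) := by
          gcongr
          simpa using log_le_harmonic_floor n n.cast_nonneg
      _ ≤ _ := hlow
  · calc _ ≤ 1 + harmonic n / Real.log (1 / p) := hupp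
      _ ≤ 1 + (1 + Real.log n) / Real.log (1 / p) := by
          gcongr
          exact harmonic_le_one_add_log n

/-- If `S₁,…,Sₙ` are i.i.d. geometric random variables on
`{1,2,…}` with success probability `1−p`, and `M = max_l S_l`, then
`log n / log(1/p) ≤ E[M] ≤ 1 + (1 + log n)/log(1/p)`. -/
theorem expected_max_geometric_bounds
    {Ω : Type*} [MeasurableSpace Ω] (P : Measure Ω) [IsProbabilityMeasure P]
    (p : ℝ) (hp0 : 0 < p) (hp1 : p < 1) (n : ℕ) (hn : 1 ≤ n)
    (S : Fin n → Ω → ℕ) (hmeas : ∀ l, Measurable (S l))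
    (hindep : iIndepFun S P)
    (hdist : ∀ l (m : ℕ), 1 ≤ m →
      P {ω | S l ω = m} = ENNReal.ofReal (p ^ (m - 1) * (1 - p))) :
    Real.log n / Real.log (1 / p) ≤
        ∫ ω, ((Finset.univ.sup fun l => S l ω : ℕ) : ℝ) ∂P ∧
      ∫ ω, ((Finset.univ.sup fun l => S l ω : ℕ) : ℝ) ∂P ≤
        1 + (1 + Real.log n) / Real.log (1 / p) :=
  expected_max_geometric_bounds_general P p hp0 hp1 n S hmeas hindep hdist
end

section
/- Let f : ℝ^n → ℝ be differentiable, μ-strongly convex, with L-Lipschitz gradient (0 < μ ≤ L). For each x ∈ ℝ^n let c(x) denote the unique minimizer of the map c ↦ f(c) + ⟨x, c⟩. Then for all x₁, x₂ ∈ ℝ^n: (i) ⟨c(x₁) − c(x₂), x₂ − x₁⟩ ≥ (1/L) ‖x₁ − x₂‖₂², and (ii) ‖c(x₁) − c(x₂)‖₂ ≤ (1/μ) ‖x₁ − x₂‖₂. -/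
/-!
Since `c x` minimises `f + ⟪x, ·⟫`, first-order optimality gives `∇f (c x) = -x`, so
`∇f (c x₁) - ∇f (c x₂) = x₂ - x₁` and both claims are statements about the gradient of `f`.

(i) is the Baillon–Haddad cocoercivity `⟪∇f a - ∇f b, a - b⟫ ≥ ‖∇f a - ∇f b‖² / L` of the gradient
of a convex function with `L`-Lipschitz gradient: the supporting hyperplane at `x`, evaluated at
the gradient step `y - (∇f y - ∇f x) / L`, combined with the descent lemma
`f z ≤ f y + ⟪∇f y, z - y⟫ + L/2 ‖z - y‖²`, gives
`f y ≥ f x + ⟪∇f x, y - x⟫ + ‖∇f y - ∇f x‖² / (2L)`; adding this to its mirror image yields (i).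

(ii) follows from the strong monotonicity `⟪∇f a - ∇f b, a - b⟫ ≥ μ‖a - b‖²`, which is the
monotonicity of the gradient of the convex function `f - μ/2 ‖·‖²`, and Cauchy–Schwarz.
-/

open scoped RealInnerProductSpace
open Set

variable {E : Type*} [NormedAddCommGroup E] [InnerProductSpace ℝ E]

theorem inner_sub_sub_eq_neg_add (a b x y : E) :
    ⟪a - b, x - y⟫ = -(⟪a, y - x⟫ + ⟪b, x - y⟫) := by
  rw [← neg_sub y x, inner_sub_left, inner_neg_right]; ring

theorem norm_le_one_div_mul_of_mul_norm_sq_le_inner {u v : E} {μ : ℝ} (hμ : 0 < μ)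
    (h : μ * ‖u‖ ^ 2 ≤ ⟪v, u⟫) : ‖u‖ ≤ 1 / μ * ‖v‖ := by
  rw [one_div_mul_eq_div, le_div_iff₀ hμ]
  rcases (norm_nonneg u).eq_or_lt with hu | hu
  · rw [← hu, zero_mul]; exact norm_nonneg v
  · refine le_of_mul_le_mul_right ?_ hu
    nlinarith [real_inner_le_norm v u]

variable [CompleteSpace E]

theorem HasGradientAt.hasDerivAt_comp_add_smul {f : E → ℝ} {g x v : E} {t : ℝ}
    (hf : HasGradientAt f g (x + t • v)) :
    HasDerivAt (fun s : ℝ => f (x + s • v)) ⟪g, v⟫ t := by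
  have hline : HasDerivAt (fun s : ℝ => x + s • v) v t := by
    simpa using ((hasDerivAt_id t).smul_const v).const_add x
  simpa [Function.comp_def] using hf.hasFDerivAt.comp_hasDerivAt t hline

theorem ConvexOn.add_inner_sub_le_of_hasGradientAt {f : E → ℝ} {g x : E}
    (hf : ConvexOn ℝ univ f) (hx : HasGradientAt f g x) (y : E) :
    f x + ⟪g, y - x⟫ ≤ f y := by
  have hline : ConvexOn ℝ univ (fun s : ℝ => f (x + s • (y - x))) := by
    simpa [Function.comp_def, AffineMap.lineMap_apply_module', add_comm] using
      hf.comp_affineMap (AffineMap.lineMap x y)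
  have hderiv := hline.le_slope_of_hasDerivAt (mem_univ 0) (mem_univ 1) zero_lt_one
    (HasGradientAt.hasDerivAt_comp_add_smul (by simpa using hx))
  simp only [slope_def_field, one_smul, add_sub_cancel, zero_smul, add_zero, sub_zero,
    div_one] at hderiv
  linarith

theorem ConvexOn.inner_sub_nonneg_of_hasGradientAt {f : E → ℝ} {g : E → E}
    (hf : ConvexOn ℝ univ f) (hgrad : ∀ x, HasGradientAt f (g x) x) (x y : E) :
    0 ≤ ⟪g x - g y, x - y⟫ := by
  have hx := hf.add_inner_sub_le_of_hasGradientAt (hgrad x) y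
  have hy := hf.add_inner_sub_le_of_hasGradientAt (hgrad y) x
  rw [inner_sub_sub_eq_neg_add]
  linarith

theorem HasGradientAt.sub_half_mul_norm_sq {f : E → ℝ} {g x : E} (hf : HasGradientAt f g x) (a : ℝ) :
    HasGradientAt (fun y => f y - a / 2 * ‖y‖ ^ 2) (g - a • x) x := by
  rw [hasGradientAt_iff_hasFDerivAt] at hf ⊢
  refine (hf.sub ((hasStrictFDerivAt_norm_sq x).hasFDerivAt.const_mul (a / 2))).congr_fderiv ?_
  ext y
  simp only [sub_apply, InnerProductSpace.toDual_apply_apply,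
    smul_apply, coe_innerSL_apply, nsmul_eq_mul, Nat.cast_ofNat, smul_eq_mul,
    map_sub, map_smul, sub_right_inj]
  ring

theorem mul_norm_sub_sq_le_inner_of_convexOn_sub {f : E → ℝ} {g : E → E} {μ : ℝ}
    (hconv : ConvexOn ℝ univ (fun x => f x - μ / 2 * ‖x‖ ^ 2))
    (hgrad : ∀ x, HasGradientAt f (g x) x) (x y : E) :
    μ * ‖x - y‖ ^ 2 ≤ ⟪g x - g y, x - y⟫ := by
  have := hconv.inner_sub_nonneg_of_hasGradientAt (fun x => (hgrad x).sub_half_mul_norm_sq μ) x y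
  rwa [sub_sub_sub_comm, ← smul_sub, inner_sub_left, real_inner_smul_left,
    real_inner_self_eq_norm_sq, sub_nonneg] at this

theorem le_add_inner_add_sq_of_lipschitz_gradient {f : E → ℝ} {g : E → E} {L : ℝ}
    (hgrad : ∀ x, HasGradientAt f (g x) x)
    (hlip : ∀ x y, ‖g x - g y‖ ≤ L * ‖x - y‖) (x y : E) :
    f y ≤ f x + ⟪g x, y - x⟫ + L / 2 * ‖y - x‖ ^ 2 := by
  set v := y - x
  have hφ (t : ℝ) : HasDerivAt (fun s : ℝ => f (x + s • v)) ⟪g (x + t • v), v⟫ t :=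
    (hgrad _).hasDerivAt_comp_add_smul
  have hB (t : ℝ) : HasDerivAt (fun s : ℝ => f x + s * ⟪g x, v⟫ + L / 2 * s ^ 2 * ‖v‖ ^ 2)
      (⟪g x, v⟫ + L * t * ‖v‖ ^ 2) t := by
    refine (((hasDerivAt_id' t).mul_const ⟪g x, v⟫).const_add (f x)).fun_add
      (((hasDerivAt_pow 2 t).const_mul (L / 2)).mul_const (‖v‖ ^ 2)) |>.congr_deriv ?_
    ring
  have hslope (t : ℝ) (ht : 0 ≤ t) : ⟪g (x + t • v), v⟫ ≤ ⟪g x, v⟫ + L * t * ‖v‖ ^ 2 := by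
    calc ⟪g (x + t • v), v⟫ = ⟪g x, v⟫ + ⟪g (x + t • v) - g x, v⟫ := by
          rw [inner_sub_left]; ring
      _ ≤ ⟪g x, v⟫ + ‖g (x + t • v) - g x‖ * ‖v‖ := by gcongr; exact real_inner_le_norm _ _
      _ ≤ ⟪g x, v⟫ + L * ‖x + t • v - x‖ * ‖v‖ := by gcongr; exact hlip _ _
      _ = ⟪g x, v⟫ + L * t * ‖v‖ ^ 2 := by
          rw [add_sub_cancel_left, norm_smul, Real.norm_of_nonneg ht]; ring
  have := image_le_of_deriv_right_le_deriv_boundary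
    (fun t _ => (hφ t).continuousAt.continuousWithinAt) (fun t _ => (hφ t).hasDerivWithinAt)
    (by simp) (fun t _ => (hB t).continuousAt.continuousWithinAt)
    (fun t _ => (hB t).hasDerivWithinAt) (fun t ht => hslope t ht.1) (right_mem_Icc.2 zero_le_one)
  simpa [v] using this

theorem ConvexOn.add_inner_add_norm_sq_le_of_lipschitz_gradient {f : E → ℝ} {g : E → E} {L : ℝ}
    (hf : ConvexOn ℝ univ f) (hL : 0 < L) (hgrad : ∀ x, HasGradientAt f (g x) x)
    (hlip : ∀ x y, ‖g x - g y‖ ≤ L * ‖x - y‖) (x y : E) :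
    f x + ⟪g x, y - x⟫ + 1 / (2 * L) * ‖g y - g x‖ ^ 2 ≤ f y := by
  set w := g y - g x
  set z := y - L⁻¹ • w
  have hlower := hf.add_inner_sub_le_of_hasGradientAt (hgrad x) z
  have hupper := le_add_inner_add_sq_of_lipschitz_gradient hgrad hlip y z
  have hzx : z - x = (y - x) - L⁻¹ • w := by simp only [z]; abel
  have hzy : z - y = -(L⁻¹ • w) := by simp only [z]; abel
  rw [hzx, inner_sub_right, real_inner_smul_right] at hlower
  rw [hzy, inner_neg_right, real_inner_smul_right, norm_neg, norm_smul, mul_pow,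
    Real.norm_of_nonneg (inv_nonneg.2 hL.le)] at hupper
  have hw : ⟪g y, w⟫ - ⟪g x, w⟫ = ‖w‖ ^ 2 := by
    rw [← inner_sub_left]; exact real_inner_self_eq_norm_sq w
  have hcoef : L / 2 * (L⁻¹ ^ 2 * ‖w‖ ^ 2) = L⁻¹ * ‖w‖ ^ 2 - 1 / (2 * L) * ‖w‖ ^ 2 := by
    field_simp; ring
  linear_combination hlower + hupper - L⁻¹ * hw + hcoef

theorem ConvexOn.one_div_mul_norm_sq_le_inner_of_lipschitz_gradient {f : E → ℝ} {g : E → E}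
    {L : ℝ} (hf : ConvexOn ℝ univ f) (hL : 0 < L) (hgrad : ∀ x, HasGradientAt f (g x) x)
    (hlip : ∀ x y, ‖g x - g y‖ ≤ L * ‖x - y‖) (x y : E) :
    1 / L * ‖g x - g y‖ ^ 2 ≤ ⟪g x - g y, x - y⟫ := by
  have hx := hf.add_inner_add_norm_sq_le_of_lipschitz_gradient hL hgrad hlip x y
  have hy := hf.add_inner_add_norm_sq_le_of_lipschitz_gradient hL hgrad hlip y x
  rw [norm_sub_rev] at hx
  rw [inner_sub_sub_eq_neg_add]
  have : 1 / L * ‖g x - g y‖ ^ 2 = 2 * (1 / (2 * L) * ‖g x - g y‖ ^ 2) := by field_simp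
  linarith

theorem HasGradientAt.eq_neg_of_forall_add_inner_le {f : E → ℝ} {g a c : E}
    (hf : HasGradientAt f g c) (hmin : ∀ y, f c + ⟪a, c⟫ ≤ f y + ⟪a, y⟫) : g = -a := by
  have hF : HasFDerivAt (fun y => f y + ⟪a, y⟫) (InnerProductSpace.toDual ℝ E (g + a)) c := by
    rw [map_add]
    exact hf.hasFDerivAt.add (InnerProductSpace.toDual ℝ E a).hasFDerivAt
  have := IsLocalMin.hasFDerivAt_eq_zero (Filter.Eventually.of_forall hmin) hF
  rw [LinearIsometryEquiv.map_eq_zero_iff] at this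
  exact eq_neg_of_add_eq_zero_left this

/-- For a `μ`-strongly convex, `L`-smooth `f`, with
`c(x) = argmin_c (f(c) + ⟨x,c⟩)`: (i) `⟨c(x₁) − c(x₂), x₂ − x₁⟩ ≥
(1/L)‖x₁ − x₂‖²`, and (ii) `‖c(x₁) − c(x₂)‖ ≤ (1/μ)‖x₁ − x₂‖`. -/
theorem argmin_map_cocoercive_and_lipschitz {n : ℕ}
    (f : EuclideanSpace ℝ (Fin n) → ℝ)
    (g : EuclideanSpace ℝ (Fin n) → EuclideanSpace ℝ (Fin n))
    (μ L : ℝ) (hμ : 0 < μ) (hμL : μ ≤ L)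
    (hconv : ConvexOn ℝ Set.univ (fun x => f x - μ / 2 * ‖x‖ ^ 2))
    (hgrad : ∀ x, HasGradientAt f (g x) x)
    (hlip : ∀ x y, ‖g x - g y‖ ≤ L * ‖x - y‖)
    (c : EuclideanSpace ℝ (Fin n) → EuclideanSpace ℝ (Fin n))
    (hc : ∀ x y, f (c x) + ⟪x, c x⟫ ≤ f y + ⟪x, y⟫) :
    (∀ x₁ x₂, (1 / L) * ‖x₁ - x₂‖ ^ 2 ≤ ⟪c x₁ - c x₂, x₂ - x₁⟫) ∧
    (∀ x₁ x₂, ‖c x₁ - c x₂‖ ≤ (1 / μ) * ‖x₁ - x₂‖) := by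
  have hf : ConvexOn ℝ univ f :=
    strongConvexOn_zero.1 ((strongConvexOn_iff_convex.2 hconv).mono hμ.le)
  have hgrad_sub (x₁ x₂) : g (c x₁) - g (c x₂) = x₂ - x₁ := by
    rw [(hgrad _).eq_neg_of_forall_add_inner_le (hc x₁),
      (hgrad _).eq_neg_of_forall_add_inner_le (hc x₂)]
    abel
  refine ⟨fun x₁ x₂ => ?_, fun x₁ x₂ => ?_⟩
  · have := hf.one_div_mul_norm_sq_le_inner_of_lipschitz_gradient (hμ.trans_le hμL) hgrad hlip
      (c x₁) (c x₂)
    rwa [hgrad_sub, norm_sub_rev, real_inner_comm] at this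
  · have := mul_norm_sub_sq_le_inner_of_convexOn_sub hconv hgrad (c x₁) (c x₂)
    rw [hgrad_sub] at this
    simpa only [norm_sub_rev x₂] using norm_le_one_div_mul_of_mul_norm_sq_le_inner hμ this
end

section
/- Let f : ℝ^n → ℝ be differentiable, μ-strongly convex, with L-Lipschitz gradient (0 < μ ≤ L), and for x ∈ ℝ^n let c(x) be the unique minimizer of c ↦ f(c) + ⟨x, c⟩. Let A be a nonzero real r×n matrix, let λ⁺ > 0 be the smallest nonzero eigenvalue of AAᵀ and λ_max the largest eigenvalue of AAᵀ, and define G : ℝ^r → ℝ^r by G(v) := A c(Aᵀ v). Then: (i) for all v₁, v₂ ∈ Im(A), ⟨G(v₂) − G(v₁), v₁ − v₂⟩ ≥ (λ⁺/L) ‖v₁ − v₂‖₂²; and (ii) for all v₁, v₂ ∈ ℝ^r, ‖G(v₁) − G(v₂)‖₂ ≤ (λ_max/μ) ‖v₁ − v₂‖₂. In other words, the dual function D(v) := min_c (f(c) + ⟨v, A c⟩), whose gradient is ∇D(v) = A c(Aᵀ v), is (λ⁺/L)-strongly concave on Im(A) and (λ_max/μ)-smooth. -/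
open Matrix
open scoped RealInnerProductSpace

/-!
Strong convexity makes `∇f` strongly monotone (constant `μ`), and the descent lemma for an
`L`-Lipschitz gradient of a convex function makes it cocoercive (constant `1/L`, Baillon–Haddad).
As `∇f (c x) = -x`, these turn into `μ ‖c x₁ - c x₂‖ ≤ ‖x₁ - x₂‖` and
`‖x₁ - x₂‖² ≤ L ⟪x₁ - x₂, c x₂ - c x₁⟫`. Composing with `Aᵀ` and `A`, the spectral decomposition
of `AAᵀ` gives `‖Aᵀ v‖² ≤ λ_max ‖v‖²` (hence also `‖A w‖ ≤ √λ_max ‖w‖`), and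
`λ⁺ ‖v‖² ≤ ‖Aᵀ v‖²` on `Im A = Im (AAᵀ)`, which is orthogonal to the kernel of `AAᵀ`.
-/

section ConvexGradient

variable {E : Type*} [NormedAddCommGroup E] [InnerProductSpace ℝ E] [CompleteSpace E]
  {f : E → ℝ} {g : E → E} {g' x y : E} {s : Set E} {μ L : ℝ}

theorem HasGradientAt.hasDerivAt_comp_lineMap {t : ℝ}
    (hf : HasGradientAt f g' ((AffineMap.lineMap x y : ℝ →ᵃ[ℝ] E) t)) :
    HasDerivAt (fun t ↦ f ((AffineMap.lineMap x y : ℝ →ᵃ[ℝ] E) t)) ⟪g', y - x⟫ t :=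
  (hasGradientAt_iff_hasFDerivAt.mp hf).comp_hasDerivAt t AffineMap.hasDerivAt_lineMap

theorem StrongConvexOn.add_inner_add_le (hf : StrongConvexOn s μ f) (hx : x ∈ s) (hy : y ∈ s)
    (hg : HasGradientAt f g' x) : f x + ⟪g', y - x⟫ + μ / 2 * ‖y - x‖ ^ 2 ≤ f y := by
  have hconv := (strongConvexOn_iff_convex.mp hf).comp_affineMap (AffineMap.lineMap x y)
  have hderiv : HasDerivAt (fun t ↦ f ((AffineMap.lineMap x y : ℝ →ᵃ[ℝ] E) t)
      - μ / 2 * ‖(AffineMap.lineMap x y : ℝ →ᵃ[ℝ] E) t‖ ^ 2)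
      (⟪g', y - x⟫ - μ / 2 * (2 * ⟪x, y - x⟫)) 0 := by
    have h := (AffineMap.hasDerivAt_lineMap (a := x) (b := y) (x := (0 : ℝ))).norm_sq
    simp only [AffineMap.lineMap_apply_zero] at h
    exact (HasGradientAt.hasDerivAt_comp_lineMap (by simpa using hg)).sub (h.const_mul _)
  have key := hconv.le_slope_of_hasDerivAt (x := 0) (y := 1) (by simpa) (by simpa) one_pos hderiv
  simp only [slope_def_field, Function.comp_apply, AffineMap.lineMap_apply_zero,
    AffineMap.lineMap_apply_one, sub_zero, div_one] at key
  rw [norm_sub_sq_real, real_inner_comm x y]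
  simp only [inner_sub_right, real_inner_self_eq_norm_sq] at key ⊢
  linarith

theorem StrongConvexOn.mul_norm_sub_sq_le_inner {gx gy : E} (hf : StrongConvexOn s μ f)
    (hx : x ∈ s) (hy : y ∈ s) (hgx : HasGradientAt f gx x) (hgy : HasGradientAt f gy y) :
    μ * ‖x - y‖ ^ 2 ≤ ⟪gx - gy, x - y⟫ := by
  have hxy := hf.add_inner_add_le hx hy hgx
  have hyx := hf.add_inner_add_le hy hx hgy
  rw [norm_sub_rev] at hxy
  have : ⟪gx - gy, x - y⟫ = -⟪gx, y - x⟫ - ⟪gy, x - y⟫ := by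
    rw [← neg_sub y x, inner_neg_right, inner_sub_left, inner_neg_right]; ring
  linarith

theorem le_add_inner_add_of_gradient_lipschitz (hg : ∀ z, HasGradientAt f (g z) z)
    (hlip : ∀ z, ‖g z - g x‖ ≤ L * ‖z - x‖) :
    f y ≤ f x + ⟪g x, y - x⟫ + L / 2 * ‖y - x‖ ^ 2 := by
  let γ : ℝ → E := AffineMap.lineMap x y
  let q : ℝ → ℝ := fun t ↦ f (γ t) - t * ⟪g x, y - x⟫ - L / 2 * t ^ 2 * ‖y - x‖ ^ 2
  have hq : ∀ t, HasDerivAt q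
      (⟪g (γ t) - g x, y - x⟫ - L * t * ‖y - x‖ ^ 2) t := by
    intro t
    have h := (((hg (γ t)).hasDerivAt_comp_lineMap.sub
      ((hasDerivAt_id t).mul_const ⟪g x, y - x⟫)).sub
      (((hasDerivAt_pow 2 t).const_mul (L / 2)).mul_const (‖y - x‖ ^ 2)))
    refine h.congr_deriv ?_
    rw [inner_sub_left]; push_cast; ring
  have hanti : AntitoneOn q (Set.Ici 0) := by
    refine antitoneOn_of_hasDerivWithinAt_nonpos (convex_Ici 0)
      (fun t _ ↦ (hq t).continuousAt.continuousWithinAt) (fun t _ ↦ (hq t).hasDerivWithinAt) ?_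
    intro t ht
    rw [interior_Ici, Set.mem_Ioi] at ht
    have hγ : ‖γ t - x‖ = t * ‖y - x‖ := by
      rw [← dist_eq_norm, dist_lineMap_left, Real.norm_of_nonneg ht.le, dist_eq_norm, norm_sub_rev]
    have : ⟪g (γ t) - g x, y - x⟫ ≤ L * t * ‖y - x‖ ^ 2 :=
      calc ⟪g (γ t) - g x, y - x⟫ ≤ ‖g (γ t) - g x‖ * ‖y - x‖ := real_inner_le_norm _ _
        _ ≤ L * ‖γ t - x‖ * ‖y - x‖ := by gcongr; exact hlip _
        _ = L * t * ‖y - x‖ ^ 2 := by rw [hγ]; ring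
    linarith
  have := hanti (Set.mem_Ici.mpr le_rfl) (show (1 : ℝ) ∈ Set.Ici 0 by simp) zero_le_one
  simp only [q, γ, AffineMap.lineMap_apply_zero, AffineMap.lineMap_apply_one] at this
  linarith

theorem ConvexOn.add_inner_add_norm_sq_div_le (hf : ConvexOn ℝ Set.univ f) (hL : 0 < L)
    (hg : ∀ z, HasGradientAt f (g z) z) (hlip : ∀ x y, ‖g x - g y‖ ≤ L * ‖x - y‖) (a b : E) :
    f a + ⟪g a, b - a⟫ + ‖g b - g a‖ ^ 2 / (2 * L) ≤ f b := by
  -- Descent lemma from `b` and first-order convexity from `a`, both at the gradient step `z`.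
  set d := g b - g a
  set z := b - L⁻¹ • d
  have hdescent : f z ≤ f b + ⟪g b, z - b⟫ + L / 2 * ‖z - b‖ ^ 2 :=
    le_add_inner_add_of_gradient_lipschitz hg fun w ↦ hlip w b
  have hsupport : f a + ⟪g a, z - a⟫ ≤ f z := by
    simpa using (strongConvexOn_zero.mpr hf).add_inner_add_le trivial trivial (hg a)
  have hzb : z - b = -(L⁻¹ • d) := by simp [z]
  have hza : z - a = (b - a) - L⁻¹ • d := by simp only [z]; abel
  have hd : L⁻¹ * ⟪g b, d⟫ - L⁻¹ * ⟪g a, d⟫ = L⁻¹ * ‖d‖ ^ 2 := by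
    rw [← mul_sub, ← inner_sub_left, real_inner_self_eq_norm_sq]
  rw [hzb, inner_neg_right, real_inner_smul_right, norm_neg, norm_smul, Real.norm_of_nonneg
    (inv_nonneg.mpr hL.le)] at hdescent
  rw [hza, inner_sub_right, real_inner_smul_right] at hsupport
  have : L / 2 * (L⁻¹ * ‖d‖) ^ 2 = L⁻¹ * ‖d‖ ^ 2 - ‖d‖ ^ 2 / (2 * L) := by
    field_simp; ring
  linarith

theorem ConvexOn.gradient_cocoercive (hf : ConvexOn ℝ Set.univ f) (hL : 0 < L)
    (hg : ∀ z, HasGradientAt f (g z) z) (hlip : ∀ x y, ‖g x - g y‖ ≤ L * ‖x - y‖) (a b : E) :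
    ‖g a - g b‖ ^ 2 ≤ L * ⟪g a - g b, a - b⟫ := by
  have hab := hf.add_inner_add_norm_sq_div_le hL hg hlip a b
  have hba := hf.add_inner_add_norm_sq_div_le hL hg hlip b a
  rw [norm_sub_rev] at hab
  have : ⟪g a - g b, a - b⟫ = -⟪g a, b - a⟫ - ⟪g b, a - b⟫ := by
    rw [← neg_sub b a, inner_neg_right, inner_sub_left, inner_neg_right]; ring
  have : ‖g a - g b‖ ^ 2 / (2 * L) + ‖g a - g b‖ ^ 2 / (2 * L) = ‖g a - g b‖ ^ 2 / L := by
    field_simp; ring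
  rw [← div_le_iff₀' hL]
  linarith

theorem HasGradientAt.eq_neg_of_forall_add_inner_le_s18 (hg : HasGradientAt f g' y)
    (hmin : ∀ z, f y + ⟪x, y⟫ ≤ f z + ⟪x, z⟫) : g' = -x := by
  have hderiv := (hasGradientAt_iff_hasFDerivAt.mp hg).add (innerSL ℝ x).hasFDerivAt
  have hzero := IsLocalMin.hasFDerivAt_eq_zero (Filter.Eventually.of_forall hmin) hderiv
  have := congrArg (fun φ ↦ φ (g' + x)) hzero
  simp only [_root_.add_apply, InnerProductSpace.toDual_apply_apply, innerSL_apply_apply,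
    ← inner_add_left, _root_.zero_apply, inner_self_eq_zero] at this
  exact eq_neg_of_add_eq_zero_left this

end ConvexGradient

section ArgminMap

variable {E : Type*} [NormedAddCommGroup E] [InnerProductSpace ℝ E] {c g : E → E} {μ L : ℝ}

theorem norm_sub_sq_le_mul_inner_of_cocoercive (hgc : ∀ x, g (c x) = -x)
    (hco : ∀ a b, ‖g a - g b‖ ^ 2 ≤ L * ⟪g a - g b, a - b⟫) (x₁ x₂ : E) :
    ‖x₁ - x₂‖ ^ 2 ≤ L * ⟪x₁ - x₂, c x₂ - c x₁⟫ := by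
  simpa [hgc, neg_add_eq_sub] using hco (c x₂) (c x₁)

theorem mul_norm_sub_le_of_strongly_monotone (hgc : ∀ x, g (c x) = -x)
    (hmono : ∀ a b, μ * ‖a - b‖ ^ 2 ≤ ⟪g a - g b, a - b⟫) (x₁ x₂ : E) :
    μ * ‖c x₁ - c x₂‖ ≤ ‖x₁ - x₂‖ := by
  have h : μ * ‖c x₁ - c x₂‖ * ‖c x₁ - c x₂‖ ≤ ‖x₁ - x₂‖ * ‖c x₁ - c x₂‖ :=
    calc μ * ‖c x₁ - c x₂‖ * ‖c x₁ - c x₂‖ ≤ ⟪x₂ - x₁, c x₁ - c x₂⟫ := by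
          simpa [hgc, neg_add_eq_sub, pow_two, mul_assoc] using hmono (c x₁) (c x₂)
      _ ≤ ‖x₁ - x₂‖ * ‖c x₁ - c x₂‖ := by
          rw [norm_sub_rev]; exact real_inner_le_norm _ _
  rcases (norm_nonneg (c x₁ - c x₂)).eq_or_lt with h0 | h0
  · rw [← h0, mul_zero]; exact norm_nonneg _
  · exact le_of_mul_le_mul_right h h0

end ArgminMap

namespace LinearMap.IsSymmetric

variable {E : Type*} [NormedAddCommGroup E] [InnerProductSpace ℝ E] [FiniteDimensional ℝ E]
  {T : E →ₗ[ℝ] E}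

theorem inner_apply_self_eq_sum (hT : T.IsSymmetric) (u : E) :
    ⟪T u, u⟫ = ∑ i, hT.eigenvalues rfl i * ⟪hT.eigenvectorBasis rfl i, u⟫ ^ 2 := by
  rw [real_inner_comm, ← (hT.eigenvectorBasis rfl).sum_inner_mul_inner]
  refine Finset.sum_congr rfl fun i _ ↦ ?_
  rw [← hT, hT.apply_eigenvectorBasis, real_inner_smul_left, real_inner_comm u]
  simp only [RCLike.ofReal_real_eq_id, id_eq]
  ring

theorem inner_apply_self_le {M : ℝ} (hT : T.IsSymmetric)
    (hM : ∀ t, Module.End.HasEigenvalue T t → t ≤ M) (u : E) : ⟪T u, u⟫ ≤ M * ‖u‖ ^ 2 := by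
  rw [hT.inner_apply_self_eq_sum, ← (hT.eigenvectorBasis rfl).sum_sq_inner_right, Finset.mul_sum]
  gcongr with i
  exact hM _ (hT.hasEigenvalue_eigenvalues rfl i)

theorem le_inner_apply_self_of_mem_range {m : ℝ} (hT : T.IsSymmetric)
    (hm : ∀ t, t ≠ 0 → Module.End.HasEigenvalue T t → m ≤ t) {u : E} (hu : u ∈ range T) :
    m * ‖u‖ ^ 2 ≤ ⟪T u, u⟫ := by
  obtain ⟨w, rfl⟩ := hu
  rw [hT.inner_apply_self_eq_sum, ← (hT.eigenvectorBasis rfl).sum_sq_inner_right, Finset.mul_sum]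
  refine Finset.sum_le_sum fun i _ ↦ ?_
  by_cases h : hT.eigenvalues rfl i = 0
  · have : ⟪hT.eigenvectorBasis rfl i, T w⟫ = 0 := by
      rw [← hT, hT.apply_eigenvectorBasis, h]; simp
    simp [this]
  · exact mul_le_mul_of_nonneg_right (hm _ h (hT.hasEigenvalue_eigenvalues rfl i)) (sq_nonneg _)

end LinearMap.IsSymmetric

namespace LinearMap

variable {E F : Type*} [NormedAddCommGroup E] [InnerProductSpace ℝ E] [FiniteDimensional ℝ E]
  [NormedAddCommGroup F] [InnerProductSpace ℝ F] [FiniteDimensional ℝ F] (S : E →ₗ[ℝ] F)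

theorem inner_self_comp_adjoint_apply_self (u : F) :
    ⟪(S ∘ₗ S.adjoint) u, u⟫ = ‖S.adjoint u‖ ^ 2 := by
  rw [comp_apply, ← adjoint_inner_right, real_inner_self_eq_norm_sq]

variable {S}

theorem norm_adjoint_apply_le {M : ℝ}
    (hM : ∀ t, Module.End.HasEigenvalue (S ∘ₗ S.adjoint) t → t ≤ M) (u : F) :
    ‖S.adjoint u‖ ≤ √M * ‖u‖ := by
  have h := (isSymmetric_self_comp_adjoint S).inner_apply_self_le hM u
  rw [inner_self_comp_adjoint_apply_self] at h
  rw [← Real.sqrt_sq (norm_nonneg _), ← Real.sqrt_sq (norm_nonneg u),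
    ← Real.sqrt_mul' _ (sq_nonneg _)]
  exact Real.sqrt_le_sqrt h

theorem mul_norm_sq_le_norm_adjoint_apply_sq {m : ℝ}
    (hm : ∀ t, t ≠ 0 → Module.End.HasEigenvalue (S ∘ₗ S.adjoint) t → m ≤ t) {u : F}
    (hu : u ∈ range S) : m * ‖u‖ ^ 2 ≤ ‖S.adjoint u‖ ^ 2 := by
  rw [← range_self_comp_adjoint] at hu
  simpa only [inner_self_comp_adjoint_apply_self] using
    (isSymmetric_self_comp_adjoint S).le_inner_apply_self_of_mem_range hm hu

theorem norm_apply_le_of_norm_adjoint_apply_le {K : ℝ} (hK₀ : 0 ≤ K)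
    (hK : ∀ u, ‖S.adjoint u‖ ≤ K * ‖u‖) (w : E) : ‖S w‖ ≤ K * ‖w‖ := by
  have h : ‖S w‖ * ‖S w‖ ≤ K * ‖w‖ * ‖S w‖ :=
    calc ‖S w‖ * ‖S w‖ = ⟪S.adjoint (S w), w⟫ := by
          rw [adjoint_inner_left, real_inner_self_eq_norm_mul_norm]
      _ ≤ ‖S.adjoint (S w)‖ * ‖w‖ := real_inner_le_norm _ _
      _ ≤ K * ‖S w‖ * ‖w‖ := by gcongr; exact hK _
      _ = K * ‖w‖ * ‖S w‖ := by ring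
  rcases (norm_nonneg (S w)).eq_or_lt with h0 | h0
  · rw [← h0]; positivity
  · exact le_of_mul_le_mul_right h h0

end LinearMap

section DualGradient

variable {E F : Type*} [NormedAddCommGroup E] [InnerProductSpace ℝ E] [FiniteDimensional ℝ E]
  [NormedAddCommGroup F] [InnerProductSpace ℝ F] [FiniteDimensional ℝ F]
  {S : E →ₗ[ℝ] F} {c : E → E} {μ L : ℝ}

-- The gradient of the dual function `v ↦ min_x (f x + ⟪v, S x⟫)`, where `c` is the argmin map.
variable (S c) in
noncomputable def dualGradient (v : F) : F := S (c (S.adjoint v))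

theorem mul_norm_sub_sq_le_inner_dualGradient {m : ℝ} (hL : 0 < L)
    (hc : ∀ x₁ x₂, ‖x₁ - x₂‖ ^ 2 ≤ L * ⟪x₁ - x₂, c x₂ - c x₁⟫)
    (hm : ∀ u ∈ S.range, m * ‖u‖ ^ 2 ≤ ‖S.adjoint u‖ ^ 2) {v₁ v₂ : F}
    (hv₁ : v₁ ∈ S.range) (hv₂ : v₂ ∈ S.range) :
    m / L * ‖v₁ - v₂‖ ^ 2 ≤ ⟪dualGradient S c v₂ - dualGradient S c v₁, v₁ - v₂⟫ := by
  have hinner : ⟪dualGradient S c v₂ - dualGradient S c v₁, v₁ - v₂⟫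
      = ⟪S.adjoint v₁ - S.adjoint v₂, c (S.adjoint v₂) - c (S.adjoint v₁)⟫ := by
    rw [dualGradient, dualGradient, ← map_sub, ← LinearMap.adjoint_inner_right, map_sub,
      real_inner_comm]
  rw [hinner, div_mul_eq_mul_div, div_le_iff₀' hL]
  calc m * ‖v₁ - v₂‖ ^ 2 ≤ ‖S.adjoint v₁ - S.adjoint v₂‖ ^ 2 := by
        rw [← map_sub]; exact hm _ (sub_mem hv₁ hv₂)
    _ ≤ _ := hc _ _

theorem norm_dualGradient_sub_le {K : ℝ} (hμ : 0 < μ)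
    (hc : ∀ x₁ x₂, μ * ‖c x₁ - c x₂‖ ≤ ‖x₁ - x₂‖) (hK₀ : 0 ≤ K)
    (hK : ∀ u, ‖S.adjoint u‖ ≤ K * ‖u‖) (v₁ v₂ : F) :
    ‖dualGradient S c v₁ - dualGradient S c v₂‖ ≤ K ^ 2 / μ * ‖v₁ - v₂‖ := by
  calc ‖dualGradient S c v₁ - dualGradient S c v₂‖
      = ‖S (c (S.adjoint v₁) - c (S.adjoint v₂))‖ := by rw [map_sub, dualGradient, dualGradient]
    _ ≤ K * ‖c (S.adjoint v₁) - c (S.adjoint v₂)‖ :=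
        S.norm_apply_le_of_norm_adjoint_apply_le hK₀ hK _
    _ ≤ K * (‖S.adjoint v₁ - S.adjoint v₂‖ / μ) := by
        gcongr; rw [le_div_iff₀' hμ]; exact hc _ _
    _ ≤ K * (K * ‖v₁ - v₂‖ / μ) := by
        gcongr; rw [← map_sub]; exact hK _
    _ = K ^ 2 / μ * ‖v₁ - v₂‖ := by ring

end DualGradient

theorem dual_function_strong_concavity_smoothness_general {r n : ℕ}
    (f : EuclideanSpace ℝ (Fin n) → ℝ)
    (g : EuclideanSpace ℝ (Fin n) → EuclideanSpace ℝ (Fin n))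
    (μ L : ℝ) (hμ : 0 < μ) (hμL : μ ≤ L)
    (hconv : ConvexOn ℝ Set.univ (fun x => f x - μ / 2 * ‖x‖ ^ 2))
    (hgrad : ∀ x, HasGradientAt f (g x) x)
    (hlip : ∀ x y, ‖g x - g y‖ ≤ L * ‖x - y‖)
    (c : EuclideanSpace ℝ (Fin n) → EuclideanSpace ℝ (Fin n))
    (hc : ∀ x y, f (c x) + ⟪x, c x⟫ ≤ f y + ⟪x, y⟫)
    (A : Matrix (Fin r) (Fin n) ℝ)
    (lamPlus lamMax : ℝ)
    (hlp : Module.End.HasEigenvalue (Matrix.toEuclideanLin (A * Aᵀ)) lamPlus)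
    (hlp_pos : 0 < lamPlus)
    (hlp_min : ∀ t : ℝ, t ≠ 0 →
      Module.End.HasEigenvalue (Matrix.toEuclideanLin (A * Aᵀ)) t → lamPlus ≤ t)
    (hlm_max : ∀ t : ℝ,
      Module.End.HasEigenvalue (Matrix.toEuclideanLin (A * Aᵀ)) t → t ≤ lamMax)
    (G : EuclideanSpace ℝ (Fin r) → EuclideanSpace ℝ (Fin r))
    (hG : ∀ v, G v = Matrix.toEuclideanLin A (c (Matrix.toEuclideanLin Aᵀ v))) :
    (∀ v₁ ∈ LinearMap.range (Matrix.toEuclideanLin A),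
      ∀ v₂ ∈ LinearMap.range (Matrix.toEuclideanLin A),
      (lamPlus / L) * ‖v₁ - v₂‖ ^ 2 ≤ ⟪G v₂ - G v₁, v₁ - v₂⟫) ∧
    (∀ v₁ v₂, ‖G v₁ - G v₂‖ ≤ (lamMax / μ) * ‖v₁ - v₂‖) := by
  have hL : 0 < L := hμ.trans_le hμL
  have hlamMax : 0 ≤ lamMax := hlp_pos.le.trans (hlm_max _ hlp)
  have hf : StrongConvexOn Set.univ μ f := strongConvexOn_iff_convex.mpr hconv
  have hgc : ∀ x, g (c x) = -x := fun x ↦ (hgrad (c x)).eq_neg_of_forall_add_inner_le_s18 (hc x)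
  rw [toLpLin_mul_same, ← conjTranspose_eq_transpose_of_trivial,
    toEuclideanLin_conjTranspose_eq_adjoint] at hlp_min hlm_max
  rw [← conjTranspose_eq_transpose_of_trivial, toEuclideanLin_conjTranspose_eq_adjoint] at hG
  obtain rfl : G = dualGradient (toEuclideanLin A) c := funext hG
  refine ⟨fun v₁ hv₁ v₂ hv₂ ↦ ?_, fun v₁ v₂ ↦ ?_⟩
  · have hco := (strongConvexOn_zero.mp (hf.mono hμ.le)).gradient_cocoercive hL hgrad hlip
    exact mul_norm_sub_sq_le_inner_dualGradient hL (norm_sub_sq_le_mul_inner_of_cocoercive hgc hco)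
      (fun u hu ↦ LinearMap.mul_norm_sq_le_norm_adjoint_apply_sq hlp_min hu) hv₁ hv₂
  · have hmono a b := hf.mul_norm_sub_sq_le_inner trivial trivial (hgrad a) (hgrad b)
    simpa only [Real.sq_sqrt hlamMax] using norm_dualGradient_sub_le hμ
      (mul_norm_sub_le_of_strongly_monotone hgc hmono) (Real.sqrt_nonneg _)
      (LinearMap.norm_adjoint_apply_le hlm_max) v₁ v₂

/-- For a `μ`-strongly convex, `L`-smooth `f` with argmin map
`c(x) = argmin_c (f(c) + ⟨x,c⟩)`, and a nonzero `r×n` matrix `A` with `λ⁺` the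
smallest nonzero eigenvalue and `λ_max` the largest eigenvalue of `AAᵀ`, the map
`G(v) = A c(Aᵀv)` (the gradient of the dual function) satisfies:
(i) `⟨G(v₂) − G(v₁), v₁ − v₂⟩ ≥ (λ⁺/L)‖v₁ − v₂‖²` on `Im(A)`, and
(ii) `‖G(v₁) − G(v₂)‖ ≤ (λ_max/μ)‖v₁ − v₂‖` everywhere; i.e. the dual function
is `(λ⁺/L)`-strongly concave on `Im(A)` and `(λ_max/μ)`-smooth. -/
theorem dual_function_strong_concavity_smoothness {r n : ℕ}
    (f : EuclideanSpace ℝ (Fin n) → ℝ)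
    (g : EuclideanSpace ℝ (Fin n) → EuclideanSpace ℝ (Fin n))
    (μ L : ℝ) (hμ : 0 < μ) (hμL : μ ≤ L)
    (hconv : ConvexOn ℝ Set.univ (fun x => f x - μ / 2 * ‖x‖ ^ 2))
    (hgrad : ∀ x, HasGradientAt f (g x) x)
    (hlip : ∀ x y, ‖g x - g y‖ ≤ L * ‖x - y‖)
    (c : EuclideanSpace ℝ (Fin n) → EuclideanSpace ℝ (Fin n))
    (hc : ∀ x y, f (c x) + ⟪x, c x⟫ ≤ f y + ⟪x, y⟫)
    (A : Matrix (Fin r) (Fin n) ℝ) (hA : A ≠ 0)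
    (lamPlus lamMax : ℝ)
    (hlp : Module.End.HasEigenvalue (Matrix.toEuclideanLin (A * Aᵀ)) lamPlus)
    (hlp_pos : 0 < lamPlus)
    (hlp_min : ∀ t : ℝ, t ≠ 0 →
      Module.End.HasEigenvalue (Matrix.toEuclideanLin (A * Aᵀ)) t → lamPlus ≤ t)
    (hlm : Module.End.HasEigenvalue (Matrix.toEuclideanLin (A * Aᵀ)) lamMax)
    (hlm_max : ∀ t : ℝ,
      Module.End.HasEigenvalue (Matrix.toEuclideanLin (A * Aᵀ)) t → t ≤ lamMax)
    (G : EuclideanSpace ℝ (Fin r) → EuclideanSpace ℝ (Fin r))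
    (hG : ∀ v, G v = Matrix.toEuclideanLin A (c (Matrix.toEuclideanLin Aᵀ v))) :
    (∀ v₁ ∈ LinearMap.range (Matrix.toEuclideanLin A),
      ∀ v₂ ∈ LinearMap.range (Matrix.toEuclideanLin A),
      (lamPlus / L) * ‖v₁ - v₂‖ ^ 2 ≤ ⟪G v₂ - G v₁, v₁ - v₂⟫) ∧
    (∀ v₁ v₂, ‖G v₁ - G v₂‖ ≤ (lamMax / μ) * ‖v₁ - v₂‖) :=
  dual_function_strong_concavity_smoothness_general f g μ L hμ hμL hconv hgrad hlip c hc A lamPlus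
    lamMax hlp hlp_pos hlp_min hlm_max G hG
end
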